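/- For every integer N ≥ 2, the metric space (P_2(ℝ), Q_{N,2}) is not complete: there exists a sequence (μ_n)_{n≥1} in P_2(ℝ) (namely the distributions of X_n = exp(nZ/2 − n²/4) with Z standard normal) that is Cauchy for Q_{N,2} but has no limit in P_2(ℝ) for Q_{N,2}. -/

import Mathlib

open MeasureTheory Filter Topology
open scoped ENNReal NNReal

/-- The `L^p`-quantization error function at level `N`. -/
noncomputable def quantErr {E : Type*} [NormedAddCommGroup E] [MeasurableSpace E]
    (p : ℝ) (N : ℕ) (μ : Measure E) (x : Fin N → E) : ℝ :=
  (∫⁻ ξ, ⨅ i, (‖ξ - x i‖₊ : ℝ≥0∞) ^ p ∂μ).toReal ^ (1 / p)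

/-- `μ` has a finite `p`-th moment. -/
def HasFiniteMoment {E : Type*} [NormedAddCommGroup E] [MeasurableSpace E]
    (p : ℝ) (μ : Measure E) : Prop :=
  ∫⁻ ξ, (‖ξ‖₊ : ℝ≥0∞) ^ p ∂μ ≠ ∞

/-- `Q_{N,2}(μ, ν) = sup_{x ∈ ℝ^N} |e_{N,2}(μ, x) − e_{N,2}(ν, x)|`. -/
noncomputable def qDist (N : ℕ) (μ ν : Measure ℝ) : ℝ :=
  ⨆ x : Fin N → ℝ, |quantErr 2 N μ x - quantErr 2 N ν x|

section QAux
open ProbabilityTheory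

section aux
variable {N : ℕ} (hN : N ≠ 0)

/-- minimal distance to the grid -/
noncomputable def dmin (x : Fin N → ℝ) (ξ : ℝ) : ℝ := ⨅ i, |ξ - x i|

/-- minimal absolute value of grid points -/
noncomputable def mmin (x : Fin N → ℝ) : ℝ := dmin x 0

lemma mmin_eq (x : Fin N → ℝ) : mmin x = ⨅ i, |0 - x i| := rfl

lemma dmin_exists (x : Fin N → ℝ) (ξ : ℝ) (hN : N ≠ 0) :
    ∃ j, (∀ i, |ξ - x j| ≤ |ξ - x i|) ∧ dmin x ξ = |ξ - x j| := by
  have hne : (Finset.univ : Finset (Fin N)).Nonempty := by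
    simp [Finset.univ_nonempty_iff]
    exact Fin.pos_iff_nonempty.mp (Nat.pos_of_ne_zero hN)
  obtain ⟨j, -, hj⟩ := Finset.exists_min_image Finset.univ (fun i => |ξ - x i|) hne
  have hj' : ∀ i, |ξ - x j| ≤ |ξ - x i| := fun i => hj i (Finset.mem_univ i)
  refine ⟨j, hj', le_antisymm ?_ ?_⟩
  · haveI : Nonempty (Fin N) := Fin.pos_iff_nonempty.mp (Nat.pos_of_ne_zero hN)
    exact ciInf_le (Finite.bddBelow_range _) j
  · haveI : Nonempty (Fin N) := Fin.pos_iff_nonempty.mp (Nat.pos_of_ne_zero hN)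
    exact le_ciInf hj'

lemma dmin_nonneg (x : Fin N → ℝ) (ξ : ℝ) (hN : N ≠ 0) : 0 ≤ dmin x ξ := by
  obtain ⟨j, -, hj⟩ := dmin_exists x ξ hN
  rw [hj]; positivity

lemma dmin_le (x : Fin N → ℝ) (ξ : ℝ) (hN : N ≠ 0) (i : Fin N) : dmin x ξ ≤ |ξ - x i| := by
  obtain ⟨j, hj, hje⟩ := dmin_exists x ξ hN
  rw [hje]; exact hj i

lemma mmin_nonneg (x : Fin N → ℝ) (hN : N ≠ 0) : 0 ≤ mmin x := dmin_nonneg x 0 hN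

/-- the ENNReal infimum appearing in quantErr equals ofReal of dmin squared -/
lemma inf_eq_ofReal (x : Fin N → ℝ) (ξ : ℝ) (hN : N ≠ 0) :
    ⨅ i, (‖ξ - x i‖₊ : ℝ≥0∞) ^ (2:ℝ) = ENNReal.ofReal (dmin x ξ ^ 2) := by
  haveI : Nonempty (Fin N) := Fin.pos_iff_nonempty.mp (Nat.pos_of_ne_zero hN)
  obtain ⟨j, hj, hje⟩ := dmin_exists x ξ hN
  have key : ∀ a : ℝ, (‖a‖₊ : ℝ≥0∞) ^ (2:ℝ) = ENNReal.ofReal (|a| ^ 2) := by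
    intro a
    rw [← Real.rpow_natCast |a| 2, ← ENNReal.ofReal_rpow_of_nonneg (abs_nonneg a) (by norm_num),
      ← Real.enorm_eq_ofReal_abs, enorm_eq_nnnorm]
    norm_num
  rw [hje]
  refine le_antisymm ?_ ?_
  · exact (iInf_le _ j).trans_eq (key _)
  · refine le_iInf fun i => ?_
    rw [key]
    exact ENNReal.ofReal_le_ofReal (by nlinarith [hj i, abs_nonneg (ξ - x j), abs_nonneg (ξ - x i)])

lemma measurable_dmin (x : Fin N → ℝ) : Measurable (dmin x) := by
  exact Measurable.iInf (fun i => (measurable_id.sub_const (x i)).abs)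

end aux


noncomputable def Texp (s z : ℝ) : ℝ := Real.exp (s * z - s ^ 2)

lemma Texp_pos (s z : ℝ) : 0 < Texp s z := Real.exp_pos _

lemma measurable_Texp (s : ℝ) : Measurable (Texp s) :=
  Real.measurable_exp.comp ((measurable_id.const_mul s).sub_const _)

lemma gauss_density_mul (s z : ℝ) :
    gaussianPDFReal 0 1 z * Texp s z = Real.exp (-s^2/2) * gaussianPDFReal s 1 z := by
  simp only [gaussianPDFReal_def, Texp, NNReal.coe_one]
  have e : Real.exp (-(z-0)^2/(2*1)) * Real.exp (s*z - s^2)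
      = Real.exp (-s^2/2) * Real.exp (-(z-s)^2/(2*1)) := by
    rw [← Real.exp_add, ← Real.exp_add]; congr 1; ring
  linear_combination (Real.sqrt (2*Real.pi*1))⁻¹ * e

lemma gauss_density_mul_sq (s z : ℝ) :
    gaussianPDFReal 0 1 z * (Texp s z) ^ 2 = gaussianPDFReal (2*s) 1 z := by
  simp only [gaussianPDFReal_def, Texp, NNReal.coe_one]
  have e : Real.exp (-(z-0)^2/(2*1)) * Real.exp (s*z - s^2) ^ 2
      = Real.exp (-(z-2*s)^2/(2*1)) := by
    rw [pow_two (Real.exp (s*z - s^2)), ← Real.exp_add, ← Real.exp_add]; congr 1; ring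
  linear_combination (Real.sqrt (2*Real.pi*1))⁻¹ * e

lemma transfer (s : ℝ) {f : ℝ → ℝ≥0∞} (hf : Measurable f) :
    ∫⁻ ξ, f ξ ∂((gaussianReal 0 1).map (Texp s)) =
      ∫⁻ z, gaussianPDF 0 1 z * f (Texp s z) ∂(volume : Measure ℝ) := by
  rw [lintegral_map hf (measurable_Texp s), gaussianReal_of_var_ne_zero 0 one_ne_zero,
    lintegral_withDensity_eq_lintegral_mul _ (measurable_gaussianPDF 0 1)
      (show Measurable fun z => f (Texp s z) from hf.comp (measurable_Texp s))]
  rfl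

lemma G1 (s : ℝ) :
    ∫⁻ z, gaussianPDF 0 1 z * ENNReal.ofReal ((Texp s z) ^ 2) ∂(volume : Measure ℝ) = 1 := by
  have : ∀ z, gaussianPDF 0 1 z * ENNReal.ofReal ((Texp s z) ^ 2) = gaussianPDF (2*s) 1 z := by
    intro z
    rw [gaussianPDF, ← ENNReal.ofReal_mul (gaussianPDFReal_nonneg 0 1 z),
      gauss_density_mul_sq, gaussianPDF]
  simp_rw [this]
  exact lintegral_gaussianPDF_eq_one (2*s) one_ne_zero

lemma G2 (s : ℝ) :
    ∫⁻ z, gaussianPDF 0 1 z * ENNReal.ofReal (Texp s z) ∂(volume : Measure ℝ)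
      = ENNReal.ofReal (Real.exp (-s^2/2)) := by
  have : ∀ z, gaussianPDF 0 1 z * ENNReal.ofReal (Texp s z)
      = ENNReal.ofReal (Real.exp (-s^2/2)) * gaussianPDF s 1 z := by
    intro z
    rw [gaussianPDF, ← ENNReal.ofReal_mul (gaussianPDFReal_nonneg 0 1 z),
      gauss_density_mul, gaussianPDF, ENNReal.ofReal_mul (Real.exp_nonneg _)]
  simp_rw [this]
  rw [lintegral_const_mul _ (measurable_gaussianPDF s 1),
    lintegral_gaussianPDF_eq_one s one_ne_zero, mul_one]

lemma gaussianPDFReal_le_half (m z : ℝ) : gaussianPDFReal m 1 z ≤ 1/2 := by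
  rw [gaussianPDFReal_def]
  have h1 : Real.exp (-(z - m)^2 / (2*(1:ℝ≥0))) ≤ 1 := by
    rw [Real.exp_le_one_iff]
    have : (0:ℝ) ≤ (z-m)^2 := sq_nonneg _
    simp only [NNReal.coe_one]
    nlinarith
  have h2 : (Real.sqrt (2*Real.pi*(1:ℝ≥0)))⁻¹ ≤ 1/2 := by
    rw [inv_le_comm₀ (Real.sqrt_pos.mpr (by positivity)) (by norm_num)]
    rw [show ((1:ℝ)/2)⁻¹ = 2 by norm_num]
    simp only [NNReal.coe_one, mul_one]
    nlinarith [Real.sq_sqrt (by positivity : (0:ℝ) ≤ 2*Real.pi), Real.sqrt_nonneg (2*Real.pi),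
      Real.pi_gt_three]
  calc (Real.sqrt (2*Real.pi*(1:ℝ≥0)))⁻¹ * Real.exp (-(z - m)^2 / (2*(1:ℝ≥0)))
      ≤ (1/2) * 1 := by
        apply mul_le_mul h2 h1 (Real.exp_nonneg _) (by norm_num)
    _ = 1/2 := by norm_num

/-- tilted interval bound -/
lemma G3 {s a b : ℝ} (hs : 0 < s) (ha : 0 < a) (hab : a ≤ b) :
    ∫⁻ z, gaussianPDF 0 1 z *
        ENNReal.ofReal (Set.indicator (Set.Ioc a b) (fun ξ => ξ ^ 2) (Texp s z))
        ∂(volume : Measure ℝ)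
      ≤ ENNReal.ofReal ((Real.log b - Real.log a) / (2*s)) := by
  have hset : ∀ z : ℝ, Texp s z ∈ Set.Ioc a b ↔ z ∈ Set.Ioc ((Real.log a + s^2)/s) ((Real.log b + s^2)/s) := by
    intro z
    simp only [Set.mem_Ioc, Texp]
    constructor
    · rintro ⟨h1, h2⟩
      constructor
      · rw [div_lt_iff₀ hs]
        have := Real.log_lt_log ha h1
        rw [Real.log_exp] at this
        linarith
      · rw [le_div_iff₀ hs]
        have := Real.log_le_log (Real.exp_pos _) h2
        rw [Real.log_exp] at this
        linarith
    · rintro ⟨h1, h2⟩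
      rw [div_lt_iff₀ hs] at h1
      rw [le_div_iff₀ hs] at h2
      constructor
      · calc a = Real.exp (Real.log a) := (Real.exp_log ha).symm
          _ < _ := by apply Real.exp_lt_exp.mpr; linarith
      · calc Real.exp (s*z - s^2) ≤ Real.exp (Real.log b) := by
              apply Real.exp_le_exp.mpr; linarith
          _ = b := Real.exp_log (lt_of_lt_of_le ha hab)
  have hpt : ∀ z, gaussianPDF 0 1 z *
      ENNReal.ofReal (Set.indicator (Set.Ioc a b) (fun ξ => ξ ^ 2) (Texp s z))
      = Set.indicator (Set.Ioc ((Real.log a + s^2)/s) ((Real.log b + s^2)/s))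
          (fun z => gaussianPDF (2*s) 1 z) z := by
    intro z
    by_cases h : Texp s z ∈ Set.Ioc a b
    · rw [Set.indicator_of_mem h, Set.indicator_of_mem ((hset z).mp h), gaussianPDF,
        ← ENNReal.ofReal_mul (gaussianPDFReal_nonneg 0 1 z), gauss_density_mul_sq, gaussianPDF]
    · rw [Set.indicator_of_notMem h, Set.indicator_of_notMem (fun hz => h ((hset z).mpr hz))]
      simp
  simp_rw [hpt]
  rw [lintegral_indicator measurableSet_Ioc]
  calc ∫⁻ z in Set.Ioc ((Real.log a + s^2)/s) ((Real.log b + s^2)/s), gaussianPDF (2*s) 1 z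
      ≤ ∫⁻ _ in Set.Ioc ((Real.log a + s^2)/s) ((Real.log b + s^2)/s), ENNReal.ofReal (1/2) := by
        apply lintegral_mono
        intro z
        exact ENNReal.ofReal_le_ofReal (gaussianPDFReal_le_half _ _)
    _ = ENNReal.ofReal (1/2) * volume (Set.Ioc ((Real.log a + s^2)/s) ((Real.log b + s^2)/s)) := by
        rw [lintegral_const, Measure.restrict_apply MeasurableSet.univ, Set.univ_inter]
    _ ≤ ENNReal.ofReal ((Real.log b - Real.log a) / (2*s)) := by
        rw [Real.volume_Ioc, ← ENNReal.ofReal_mul (by norm_num)]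
        apply ENNReal.ofReal_le_ofReal
        have : (1:ℝ)/2 * ((Real.log b + s^2)/s - (Real.log a + s^2)/s)
            = (Real.log b - Real.log a)/(2*s) := by field_simp; ring
        linarith


/-- far-point pointwise bound -/
lemma case_far {m t X L : ℝ} (hm : 0 ≤ m) (hmt : 2*m < t) (hL : 1 ≤ L) (hX : 0 < X) :
    max (m^2 - t^2 + 2*t*X) 0 ≤
      Set.indicator (Set.Ioc (t/4) (L*t)) (fun ξ => ξ^2) X * (4/3) + (3/L)*X^2 := by
  have hL0 : 0 < L := by linarith
  have hrhs0 : 0 ≤ (3/L)*X^2 := by positivity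
  by_cases h : X ∈ Set.Ioc (t/4) (L*t)
  · rw [Set.indicator_of_mem h]
    rw [max_le_iff]
    constructor
    · nlinarith [sq_nonneg (X - 3*t/4), sq_nonneg X]
    · positivity
  · rw [Set.indicator_of_notMem h]
    simp only [Set.mem_Ioc, not_and_or, not_lt, not_le] at h
    rw [max_le_iff]
    refine ⟨?_, by positivity⟩
    rcases h with h | h
    · -- X ≤ t/4
      nlinarith
    · -- L*t < X
      have ht : 0 < t := by linarith
      have hLt : 0 < L * t := mul_pos hL0 ht
      have h1 : t * X < X^2 / L := by
        rw [lt_div_iff₀ hL0]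
        nlinarith
      have h2 : t^2 < X^2/L^2 := by
        rw [lt_div_iff₀ (by positivity)]
        nlinarith [mul_lt_mul'' h h hLt.le hLt.le]
      have h3 : X^2/L^2 ≤ X^2/L := by
        apply div_le_div_of_nonneg_left (by positivity) hL0
        nlinarith
      have hm2 : m^2 < t^2/4 := by
        nlinarith [mul_pos (by linarith : (0:ℝ) < t - 2*m) (by linarith : (0:ℝ) < t + 2*m)]
      have h4 : (3/L)*X^2 = 3*(X^2/L) := by ring
      have h5 : t^2/4 < (X^2/L^2)/4 := by linarith
      linarith [sq_nonneg t]

/-- near-point pointwise bound -/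
lemma case_near {m t X : ℝ} (hm : 0 ≤ m) (hmt : m ≤ |t|) (ht : 0 < t) (h2m : t ≤ 2*m) (hX : 0 < X) :
    max (m^2 - t^2 + 2*t*X) 0 ≤ 4*m*X := by
  rw [abs_of_pos ht] at hmt
  rw [max_le_iff]
  constructor
  · nlinarith
  · positivity

lemma case_neg {m t X : ℝ} (hm : 0 ≤ m) (hmt : m ≤ |t|) (ht : t ≤ 0) (hX : 0 < X) :
    max (m^2 - t^2 + 2*t*X) 0 = 0 := by
  rw [abs_of_nonpos ht] at hmt
  rw [max_eq_right]
  nlinarith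

/-- sqrt difference bound -/
lemma sqrt_diff_le {a b : ℝ} (ha : 0 ≤ a) (hb : 0 < b) :
    |Real.sqrt a - Real.sqrt b| ≤ |a - b| / Real.sqrt b := by
  have hsb : 0 < Real.sqrt b := Real.sqrt_pos.mpr hb
  rw [le_div_iff₀ hsb]
  have h1 : |a - b| = |Real.sqrt a - Real.sqrt b| * (Real.sqrt a + Real.sqrt b) := by
    rw [← abs_of_nonneg (by positivity : (0:ℝ) ≤ Real.sqrt a + Real.sqrt b), ← abs_mul]
    congr 1
    nlinarith [Real.sq_sqrt ha, Real.sq_sqrt hb.le]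
  rw [h1]
  have := Real.sqrt_nonneg a
  nlinarith [abs_nonneg (Real.sqrt a - Real.sqrt b)]

lemma nnnorm_rpow_two (a : ℝ) : (‖a‖₊ : ℝ≥0∞) ^ (2:ℝ) = ENNReal.ofReal (|a| ^ 2) := by
  rw [← Real.rpow_natCast |a| 2, ← ENNReal.ofReal_rpow_of_nonneg (abs_nonneg a) (by norm_num),
    ← Real.enorm_eq_ofReal_abs, enorm_eq_nnnorm]
  norm_num

lemma lintegral_pdf_one : ∫⁻ z, gaussianPDF 0 1 z ∂(volume : Measure ℝ) = 1 :=
  lintegral_gaussianPDF_eq_one 0 one_ne_zero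

/-- second moment of the lognormal pushforward equals 1 -/
lemma moment_eq (s : ℝ) :
    ∫⁻ ξ, (‖ξ‖₊ : ℝ≥0∞) ^ (2:ℝ) ∂((gaussianReal 0 1).map (Texp s)) = 1 := by
  rw [transfer s (measurable_nnnorm.coe_nnreal_ennreal.pow_const (2:ℝ))]
  rw [← G1 s]
  apply lintegral_congr
  intro z
  rw [nnnorm_rpow_two, abs_of_pos (Texp_pos s z)]

lemma mmin_le_abs {N : ℕ} (hN : N ≠ 0) (x : Fin N → ℝ) (i : Fin N) : mmin x ≤ |x i| := by
  have := dmin_le x 0 hN i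
  rwa [zero_sub, abs_neg] at this

set_option maxHeartbeats 1000000 in
lemma key_est {N : ℕ} (hN : N ≠ 0) {s L : ℝ} (hs : 0 < s) (hL : 1 ≤ L) (x : Fin N → ℝ) :
    |quantErr 2 N ((gaussianReal 0 1).map (Texp s)) x - Real.sqrt (1 + mmin x ^ 2)| ≤
      (4*N+2)*Real.exp (-s^2/2) + (N:ℝ)*(Real.log (4*L)/s + 3/L) := by
  set m := mmin x with hmdef
  have hm0 : 0 ≤ m := mmin_nonneg x hN
  set δ := Real.exp (-s^2/2) with hδdef
  have hδ0 : 0 < δ := Real.exp_pos _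
  have hL0 : 0 < L := by linarith
  have hlog0 : 0 ≤ Real.log (4*L) := Real.log_nonneg (by linarith)
  set err2 : ℝ := Real.log (4*L)/s + 3/L with herr2
  have herr20 : 0 ≤ err2 := by positivity
  set err : ℝ := 4*m*δ + err2 with herrdef
  have herr0 : 0 ≤ err := by positivity
  have mPDF : Measurable (gaussianPDF 0 1) := measurable_gaussianPDF 0 1
  have mPM : ∀ {f : ℝ → ℝ≥0∞}, Measurable f → Measurable fun z => gaussianPDF 0 1 z * f z :=
    fun hf => mPDF.mul hf
  have mT : Measurable (Texp s) := measurable_Texp s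
  have mX2 : Measurable fun z => ENNReal.ofReal ((Texp s z)^2) :=
    ((mT.pow_const 2).ennreal_ofReal)
  have mXe : Measurable fun z => ENNReal.ofReal (Texp s z) := mT.ennreal_ofReal
  set A := ∫⁻ ξ, ⨅ i, (‖ξ - x i‖₊ : ℝ≥0∞) ^ (2:ℝ) ∂((gaussianReal 0 1).map (Texp s)) with hA
  have hAeq : A = ∫⁻ z, gaussianPDF 0 1 z * ENNReal.ofReal (dmin x (Texp s z)^2)
      ∂(volume : Measure ℝ) := by
    rw [hA, lintegral_congr (fun ξ => inf_eq_ofReal x ξ hN),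
      transfer s (((measurable_dmin x).pow_const 2).ennreal_ofReal)]
  -- minimizing index for mmin
  obtain ⟨j, hj, hje⟩ := dmin_exists x 0 hN
  have hmj : m = |x j| := by rwa [zero_sub, abs_neg] at hje
  -- upper bound
  have hup : A ≤ ENNReal.ofReal (1 + m^2 + 2*m*δ) := by
    have hpt : ∀ z, gaussianPDF 0 1 z * ENNReal.ofReal (dmin x (Texp s z)^2) ≤
        gaussianPDF 0 1 z * ENNReal.ofReal ((Texp s z)^2)
        + (ENNReal.ofReal (2*m) * (gaussianPDF 0 1 z * ENNReal.ofReal (Texp s z))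
          + ENNReal.ofReal (m^2) * gaussianPDF 0 1 z) := by
      intro z
      set X := Texp s z with hX
      have hX0 : 0 < X := Texp_pos s z
      have hreal : dmin x X ^ 2 ≤ X^2 + (2*m*X + m^2) := by
        have h1 : dmin x X ≤ |X - x j| := dmin_le x X hN j
        have h2 : 0 ≤ dmin x X := dmin_nonneg x X hN
        have h3 : -x j ≤ m := by rw [hmj]; exact neg_le_abs _
        have h4 : x j ≤ m := by rw [hmj]; exact le_abs_self _
        have h5 : x j ^ 2 = m^2 := by rw [hmj]; exact (sq_abs _).symm
        have h6 : dmin x X ^ 2 ≤ (X - x j)^2 := by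
          nlinarith [mul_self_le_mul_self h2 h1, sq_abs (X - x j)]
        nlinarith [mul_le_mul_of_nonneg_left h3 hX0.le, h6]
      calc gaussianPDF 0 1 z * ENNReal.ofReal (dmin x X ^2)
          ≤ gaussianPDF 0 1 z * ENNReal.ofReal (X^2 + (2*m*X + m^2)) :=
            mul_le_mul_right (ENNReal.ofReal_le_ofReal hreal) _
        _ = gaussianPDF 0 1 z * ENNReal.ofReal (X^2)
            + (ENNReal.ofReal (2*m) * (gaussianPDF 0 1 z * ENNReal.ofReal X)
              + ENNReal.ofReal (m^2) * gaussianPDF 0 1 z) := by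
            rw [ENNReal.ofReal_add (by positivity) (by positivity),
              ENNReal.ofReal_add (by positivity) (by positivity),
              show (2:ℝ)*m*X = (2*m)*X by ring,
              ENNReal.ofReal_mul (by positivity)]
            ring
    calc A ≤ ∫⁻ z, (gaussianPDF 0 1 z * ENNReal.ofReal ((Texp s z)^2)
          + (ENNReal.ofReal (2*m) * (gaussianPDF 0 1 z * ENNReal.ofReal (Texp s z))
            + ENNReal.ofReal (m^2) * gaussianPDF 0 1 z)) ∂(volume : Measure ℝ) := by
          rw [hAeq]; exact lintegral_mono hpt
      _ = 1 + (ENNReal.ofReal (2*m) * ENNReal.ofReal δ + ENNReal.ofReal (m^2)) := by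
          rw [lintegral_add_left (mPM mX2),
            lintegral_add_left ((mPM mXe).const_mul _),
            lintegral_const_mul _ (mPM mXe), lintegral_const_mul _ mPDF,
            G1 s, G2 s, lintegral_pdf_one, mul_one]
      _ = ENNReal.ofReal (1 + m^2 + 2*m*δ) := by
          have e1 : (0:ℝ) ≤ 2*m := by linarith
          have e2 : (0:ℝ) ≤ 2*m*δ := mul_nonneg e1 hδ0.le
          have e3 : (0:ℝ) ≤ m^2 := sq_nonneg m
          rw [← ENNReal.ofReal_mul e1, ← ENNReal.ofReal_one,
            ← ENNReal.ofReal_add e2 e3,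
            ← ENNReal.ofReal_add (by norm_num) (by linarith)]
          congr 1
          ring
  have hAfin : A ≠ ∞ := ne_top_of_le_ne_top ENNReal.ofReal_ne_top hup
  -- measurability for indicator integrand
  have mInd : ∀ a b : ℝ, Measurable fun z =>
      ENNReal.ofReal (Set.indicator (Set.Ioc a b) (fun ξ : ℝ => ξ^2) (Texp s z)) := by
    intro a b
    exact (((measurable_id.pow_const 2).indicator measurableSet_Ioc).comp mT).ennreal_ofReal
  -- per-point error integral bound
  have hC : ∀ i : Fin N, (∫⁻ z, gaussianPDF 0 1 z *
      ENNReal.ofReal (max (m^2 - (x i)^2 + 2*(x i)*(Texp s z)) 0) ∂(volume : Measure ℝ))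
      ≤ ENNReal.ofReal err := by
    intro i
    set t := x i with ht
    have hmt : m ≤ |t| := mmin_le_abs hN x i
    rcases le_or_gt t 0 with h0 | h0
    · have hz : ∀ z : ℝ, gaussianPDF 0 1 z *
          ENNReal.ofReal (max (m^2 - t^2 + 2*t*(Texp s z)) 0) = 0 := by
        intro z
        rw [case_neg hm0 hmt h0 (Texp_pos s z)]
        simp
      calc (∫⁻ z, gaussianPDF 0 1 z *
            ENNReal.ofReal (max (m^2 - t^2 + 2*t*(Texp s z)) 0) ∂(volume : Measure ℝ))
          = ∫⁻ (_ : ℝ), 0 ∂(volume : Measure ℝ) := lintegral_congr hz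
        _ = 0 := lintegral_zero
        _ ≤ ENNReal.ofReal err := by positivity
    rcases le_or_gt t (2*m) with h1 | h1
    · calc (∫⁻ z, gaussianPDF 0 1 z *
            ENNReal.ofReal (max (m^2 - t^2 + 2*t*(Texp s z)) 0) ∂(volume : Measure ℝ))
          ≤ ∫⁻ z, ENNReal.ofReal (4*m) *
              (gaussianPDF 0 1 z * ENNReal.ofReal (Texp s z)) ∂(volume : Measure ℝ) := by
            apply lintegral_mono
            intro z
            dsimp only
            rw [mul_left_comm]
            apply mul_le_mul_right
            rw [← ENNReal.ofReal_mul (by linarith : (0:ℝ) ≤ 4*m)]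
            exact ENNReal.ofReal_le_ofReal
              (by have := case_near hm0 hmt h0 h1 (Texp_pos s z); linarith)
        _ = ENNReal.ofReal (4*m) * ENNReal.ofReal δ := by
            rw [lintegral_const_mul _ (mPM mXe), G2 s]
        _ ≤ ENNReal.ofReal err := by
            rw [← ENNReal.ofReal_mul (by linarith : (0:ℝ) ≤ 4*m)]
            exact ENNReal.ofReal_le_ofReal (by rw [herrdef]; nlinarith)
    · have ha : 0 < t/4 := by linarith
      have hab : t/4 ≤ L*t := by nlinarith
      have hlogeq : Real.log (L*t) - Real.log (t/4) = Real.log (4*L) := by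
        rw [← Real.log_div (by positivity) (by positivity)]
        congr 1
        field_simp
      calc (∫⁻ z, gaussianPDF 0 1 z *
            ENNReal.ofReal (max (m^2 - t^2 + 2*t*(Texp s z)) 0) ∂(volume : Measure ℝ))
          ≤ ∫⁻ z, (ENNReal.ofReal (4/3) * (gaussianPDF 0 1 z *
              ENNReal.ofReal (Set.indicator (Set.Ioc (t/4) (L*t)) (fun ξ => ξ^2) (Texp s z)))
              + ENNReal.ofReal (3/L) * (gaussianPDF 0 1 z * ENNReal.ofReal ((Texp s z)^2)))
              ∂(volume : Measure ℝ) := by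
            apply lintegral_mono
            intro z
            dsimp only
            have hpt := case_far hm0 h1 hL (Texp_pos s z)
            have hind0 : 0 ≤ Set.indicator (Set.Ioc (t/4) (L*t)) (fun ξ : ℝ => ξ^2) (Texp s z) :=
              Set.indicator_nonneg (fun y _ => sq_nonneg y) _
            calc gaussianPDF 0 1 z * ENNReal.ofReal (max (m^2 - t^2 + 2*t*(Texp s z)) 0)
                ≤ gaussianPDF 0 1 z * ENNReal.ofReal
                    (Set.indicator (Set.Ioc (t/4) (L*t)) (fun ξ => ξ^2) (Texp s z) * (4/3)
                      + (3/L)*(Texp s z)^2) :=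
                  mul_le_mul_right (ENNReal.ofReal_le_ofReal hpt) _
              _ = ENNReal.ofReal (4/3) * (gaussianPDF 0 1 z *
                    ENNReal.ofReal (Set.indicator (Set.Ioc (t/4) (L*t)) (fun ξ => ξ^2) (Texp s z)))
                  + ENNReal.ofReal (3/L) * (gaussianPDF 0 1 z * ENNReal.ofReal ((Texp s z)^2)) := by
                  rw [ENNReal.ofReal_add (by positivity) (by positivity),
                    ENNReal.ofReal_mul hind0,
                    show (3/L)*(Texp s z)^2 = (3/L) * ((Texp s z)^2) by ring,
                    ENNReal.ofReal_mul (by positivity)]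
                  ring
        _ = ENNReal.ofReal (4/3) * (∫⁻ z, gaussianPDF 0 1 z *
              ENNReal.ofReal (Set.indicator (Set.Ioc (t/4) (L*t)) (fun ξ => ξ^2) (Texp s z))
              ∂(volume : Measure ℝ)) + ENNReal.ofReal (3/L) * 1 := by
            rw [lintegral_add_left (((mPM (mInd _ _))).const_mul _),
              lintegral_const_mul _ (mPM (mInd _ _)),
              lintegral_const_mul _ (mPM mX2), G1 s]
        _ ≤ ENNReal.ofReal (4/3) * ENNReal.ofReal ((Real.log (L*t) - Real.log (t/4))/(2*s))
              + ENNReal.ofReal (3/L) * 1 := by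
            exact add_le_add_left (mul_le_mul_right (G3 hs ha hab) _) _
        _ ≤ ENNReal.ofReal err := by
            rw [mul_one, ← ENNReal.ofReal_mul (by norm_num),
              ← ENNReal.ofReal_add (by rw [hlogeq]; positivity) (by positivity)]
            apply ENNReal.ofReal_le_ofReal
            rw [hlogeq, herrdef, herr2]
            have : (4:ℝ)/3 * (Real.log (4*L)/(2*s)) = (2/3) * (Real.log (4*L)/s) := by
              field_simp
              ring
            rw [this]
            have h6 : 0 ≤ Real.log (4*L)/s := by positivity
            nlinarith [mul_nonneg (mul_nonneg (by norm_num : (0:ℝ) ≤ 4) hm0) hδ0.le]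
  -- pointwise lower bound
  have hlowpt : ∀ z, gaussianPDF 0 1 z * ENNReal.ofReal ((Texp s z)^2)
        + ENNReal.ofReal (m^2) * gaussianPDF 0 1 z
      ≤ gaussianPDF 0 1 z * ENNReal.ofReal (dmin x (Texp s z)^2)
        + ∑ i, gaussianPDF 0 1 z *
            ENNReal.ofReal (max (m^2 - (x i)^2 + 2*(x i)*(Texp s z)) 0) := by
    intro z
    set X := Texp s z with hXdef
    have hX0 : 0 < X := Texp_pos s z
    have hreal : X^2 + m^2 ≤ dmin x X^2 + ∑ i, max (m^2 - (x i)^2 + 2*(x i)*X) 0 := by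
      obtain ⟨k, hk, hke⟩ := dmin_exists x X hN
      have hsum : max (m^2 - (x k)^2 + 2*(x k)*X) 0
          ≤ ∑ i, max (m^2 - (x i)^2 + 2*(x i)*X) 0 :=
        Finset.single_le_sum (f := fun i => max (m^2 - (x i)^2 + 2*(x i)*X) 0)
          (fun i _ => le_max_right _ _) (Finset.mem_univ k)
      have h2 : X^2 + m^2 - dmin x X^2 ≤ max (m^2 - (x k)^2 + 2*(x k)*X) 0 := by
        rw [hke]
        have := le_max_left (m^2 - (x k)^2 + 2*(x k)*X) 0
        nlinarith [sq_abs (X - x k)]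
      linarith
    have hsum0 : (0:ℝ) ≤ ∑ i, max (m^2 - (x i)^2 + 2*(x i)*X) 0 :=
      Finset.sum_nonneg (fun i _ => le_max_right _ _)
    calc gaussianPDF 0 1 z * ENNReal.ofReal (X^2) + ENNReal.ofReal (m^2) * gaussianPDF 0 1 z
        = gaussianPDF 0 1 z * ENNReal.ofReal (X^2 + m^2) := by
          rw [ENNReal.ofReal_add (by positivity) (sq_nonneg m)]
          ring
      _ ≤ gaussianPDF 0 1 z * ENNReal.ofReal
            (dmin x X^2 + ∑ i, max (m^2 - (x i)^2 + 2*(x i)*X) 0) :=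
          mul_le_mul_right (ENNReal.ofReal_le_ofReal hreal) _
      _ = gaussianPDF 0 1 z * ENNReal.ofReal (dmin x X^2)
          + ∑ i, gaussianPDF 0 1 z * ENNReal.ofReal (max (m^2 - (x i)^2 + 2*(x i)*X) 0) := by
          rw [ENNReal.ofReal_add (by positivity) hsum0,
            ENNReal.ofReal_sum_of_nonneg (fun i _ => le_max_right _ _), mul_add,
            Finset.mul_sum]
  -- integrated lower bound
  have mMax : ∀ i : Fin N, Measurable fun z =>
      gaussianPDF 0 1 z * ENNReal.ofReal (max (m^2 - (x i)^2 + 2*(x i)*(Texp s z)) 0) := by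
    intro i
    exact mPM ((((mT.const_mul _).const_add _).max measurable_const).ennreal_ofReal)
  have hlow : (1 : ℝ≥0∞) + ENNReal.ofReal (m^2) ≤ A + (N:ℝ≥0∞) * ENNReal.ofReal err := by
    have lhs_eq : (∫⁻ z, (gaussianPDF 0 1 z * ENNReal.ofReal ((Texp s z)^2)
        + ENNReal.ofReal (m^2) * gaussianPDF 0 1 z) ∂(volume : Measure ℝ))
        = 1 + ENNReal.ofReal (m^2) := by
      rw [lintegral_add_left (mPM mX2), lintegral_const_mul _ mPDF, G1 s,
        lintegral_pdf_one, mul_one]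
    have rhs_eq : (∫⁻ z, (gaussianPDF 0 1 z * ENNReal.ofReal (dmin x (Texp s z)^2)
        + ∑ i, gaussianPDF 0 1 z *
            ENNReal.ofReal (max (m^2 - (x i)^2 + 2*(x i)*(Texp s z)) 0)) ∂(volume : Measure ℝ))
        ≤ A + (N:ℝ≥0∞) * ENNReal.ofReal err := by
      rw [lintegral_add_left (show Measurable fun z =>
          gaussianPDF 0 1 z * ENNReal.ofReal (dmin x (Texp s z) ^ 2) from
          mPM ((((measurable_dmin x).comp mT).pow_const 2).ennreal_ofReal)),
        lintegral_finset_sum _ (fun i _ => mMax i), ← hAeq]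
      apply add_le_add_right
      calc (∑ i : Fin N, ∫⁻ z, gaussianPDF 0 1 z *
            ENNReal.ofReal (max (m^2 - (x i)^2 + 2*(x i)*(Texp s z)) 0) ∂(volume : Measure ℝ))
          ≤ Finset.univ.card • ENNReal.ofReal err :=
            Finset.sum_le_card_nsmul _ _ _ (fun i _ => hC i)
        _ = (N:ℝ≥0∞) * ENNReal.ofReal err := by
            rw [Finset.card_univ, Fintype.card_fin, nsmul_eq_mul]
    calc (1 : ℝ≥0∞) + ENNReal.ofReal (m^2) = _ := lhs_eq.symm
      _ ≤ _ := lintegral_mono hlowpt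
      _ ≤ A + (N:ℝ≥0∞) * ENNReal.ofReal err := rhs_eq
  -- convert to real inequalities
  have hAup' : A.toReal ≤ 1 + m^2 + 2*m*δ := by
    have h := ENNReal.toReal_mono ENNReal.ofReal_ne_top hup
    rwa [ENNReal.toReal_ofReal (by nlinarith)] at h
  have hfin2 : A + (N:ℝ≥0∞) * ENNReal.ofReal err ≠ ∞ :=
    ENNReal.add_ne_top.mpr ⟨hAfin, ENNReal.mul_ne_top (ENNReal.natCast_ne_top N)
      ENNReal.ofReal_ne_top⟩
  have hAlow' : 1 + m^2 ≤ A.toReal + (N:ℝ)*err := by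
    have h := ENNReal.toReal_mono hfin2 hlow
    rwa [ENNReal.toReal_add ENNReal.one_ne_top ENNReal.ofReal_ne_top,
      ENNReal.toReal_add hAfin (ENNReal.mul_ne_top (ENNReal.natCast_ne_top N)
        ENNReal.ofReal_ne_top),
      ENNReal.toReal_mul, ENNReal.toReal_natCast, ENNReal.toReal_ofReal herr0,
      ENNReal.toReal_one, ENNReal.toReal_ofReal (sq_nonneg m)] at h
  -- from A to quantErr
  have hq : quantErr 2 N ((gaussianReal 0 1).map (Texp s)) x = Real.sqrt A.toReal := by
    rw [quantErr, Real.sqrt_eq_rpow]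
  have hb : (0:ℝ) < 1 + m^2 := by positivity
  have hbs : Real.sqrt (1 + m^2) = Real.sqrt (1 + m^2) := rfl
  have hsq := Real.sq_sqrt hb.le
  have hsnn := Real.sqrt_nonneg (1 + m^2)
  have hsb1 : 1 ≤ Real.sqrt (1 + m^2) := by
    nlinarith [sq_nonneg (Real.sqrt (1 + m^2) - 1), sq_nonneg m]
  have hsbm : m ≤ Real.sqrt (1 + m^2) := by
    nlinarith [sq_nonneg (Real.sqrt (1 + m^2) - m)]
  have hdiff : |A.toReal - (1 + m^2)| ≤ 2*m*δ + (N:ℝ)*err := by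
    rw [abs_le]
    constructor
    · nlinarith [mul_nonneg (Nat.cast_nonneg (α := ℝ) N) herr0]
    · nlinarith [mul_nonneg (Nat.cast_nonneg (α := ℝ) N) herr0, mul_nonneg hm0 hδ0.le]
  rw [hq]
  calc |Real.sqrt A.toReal - Real.sqrt (1 + m^2)|
      ≤ |A.toReal - (1 + m^2)| / Real.sqrt (1 + m^2) :=
        sqrt_diff_le ENNReal.toReal_nonneg hb
    _ ≤ (2*m*δ + (N:ℝ)*err) / Real.sqrt (1 + m^2) := by
        gcongr
    _ ≤ (4*N+2)*δ + (N:ℝ)*err2 := by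
        rw [div_le_iff₀ (by linarith : (0:ℝ) < Real.sqrt (1 + m^2))]
        have hN0 : (0:ℝ) ≤ (N:ℝ) := Nat.cast_nonneg N
        rw [herrdef]
        nlinarith [mul_nonneg hN0 herr20, mul_nonneg (mul_nonneg hN0 hm0) hδ0.le,
          mul_le_mul_of_nonneg_left hsbm (by positivity : (0:ℝ) ≤ (4*(N:ℝ)+2)*δ),
          mul_le_mul_of_nonneg_left hsb1 (mul_nonneg hN0 herr20)]

section bdd
variable {N : ℕ}

lemma ofReal_sq_rpow (d : ℝ) (hd : 0 ≤ d) :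
    ENNReal.ofReal (d ^ 2) = ENNReal.ofReal d ^ (2:ℝ) := by
  rw [show ((2:ℝ)) = ((2:ℕ):ℝ) from by norm_num, ENNReal.rpow_natCast,
    ENNReal.ofReal_pow hd]

/-- quantization error is within sqrt of second moment from mmin -/
lemma quantErr_near (hN : N ≠ 0) (μ : Measure ℝ) [IsProbabilityMeasure μ]
    (hm : HasFiniteMoment 2 μ) (x : Fin N → ℝ) :
    |quantErr 2 N μ x - mmin x| ≤
      ((∫⁻ ξ, (‖ξ‖₊ : ℝ≥0∞) ^ (2:ℝ) ∂μ) ^ (1/(2:ℝ))).toReal := by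
  haveI : Nonempty (Fin N) := Fin.pos_iff_nonempty.mp (Nat.pos_of_ne_zero hN)
  set m := mmin x with hmdef
  have hm0 : 0 ≤ m := mmin_nonneg x hN
  set G : ℝ → ℝ≥0∞ := fun ξ => ENNReal.ofReal (dmin x ξ) with hG
  set F : ℝ → ℝ≥0∞ := fun ξ => (‖ξ‖₊ : ℝ≥0∞) with hF
  have hGm : AEMeasurable G μ := (measurable_dmin x).ennreal_ofReal.aemeasurable
  have hFm : AEMeasurable F μ := measurable_nnnorm.coe_nnreal_ennreal.aemeasurable
  have hMm : AEMeasurable (fun _ : ℝ => ENNReal.ofReal m) μ := aemeasurable_const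
  obtain ⟨j, hj, hje⟩ := dmin_exists x 0 hN
  have hmj : m = |x j| := by rwa [zero_sub, abs_neg] at hje
  have hpt1 : ∀ ξ, G ξ ≤ F ξ + ENNReal.ofReal m := by
    intro ξ
    have h1 : dmin x ξ ≤ |ξ| + m := by
      have := dmin_le x ξ hN j
      rw [hmj]
      calc dmin x ξ ≤ |ξ - x j| := this
        _ ≤ |ξ| + |x j| := abs_sub _ _
    calc G ξ ≤ ENNReal.ofReal (|ξ| + m) := ENNReal.ofReal_le_ofReal h1
      _ = F ξ + ENNReal.ofReal m := by
        rw [ENNReal.ofReal_add (abs_nonneg ξ) hm0, ← Real.enorm_eq_ofReal_abs, enorm_eq_nnnorm]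
  have hpt2 : ∀ ξ, ENNReal.ofReal m ≤ G ξ + F ξ := by
    intro ξ
    obtain ⟨k, hk, hke⟩ := dmin_exists x ξ hN
    have h1 : m ≤ dmin x ξ + |ξ| := by
      have hmk : m ≤ |x k| := mmin_le_abs hN x k
      rw [hke]
      calc m ≤ |x k| := hmk
        _ ≤ |ξ - x k| + |ξ| := by
          have := abs_sub_abs_le_abs_sub (x k) ξ
          have h2 := abs_sub_comm ξ (x k)
          have h3 := abs_sub (x k) ξ
          calc |x k| = |x k - ξ + ξ| := by ring_nf
            _ ≤ |x k - ξ| + |ξ| := abs_add_le _ _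
            _ = |ξ - x k| + |ξ| := by rw [abs_sub_comm]
    calc ENNReal.ofReal m ≤ ENNReal.ofReal (dmin x ξ + |ξ|) := ENNReal.ofReal_le_ofReal h1
      _ = G ξ + F ξ := by
        rw [ENNReal.ofReal_add (dmin_nonneg x ξ hN) (abs_nonneg ξ), ← Real.enorm_eq_ofReal_abs, enorm_eq_nnnorm]
  set QG := (∫⁻ ξ, G ξ ^ (2:ℝ) ∂μ) ^ (1/(2:ℝ)) with hQG
  set B := (∫⁻ ξ, F ξ ^ (2:ℝ) ∂μ) ^ (1/(2:ℝ)) with hB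
  have hBfin : B ≠ ∞ := by
    rw [hB]
    exact ENNReal.rpow_ne_top_of_nonneg (by norm_num) hm
  have hconst : ∀ c : ℝ≥0∞, ((∫⁻ _, c ^ (2:ℝ) ∂μ) ^ (1/(2:ℝ))) = c := by
    intro c
    rw [lintegral_const, measure_univ, mul_one, ← ENNReal.rpow_mul]
    norm_num
  have hup : QG ≤ B + ENNReal.ofReal m := by
    calc QG ≤ (∫⁻ ξ, (F ξ + ENNReal.ofReal m) ^ (2:ℝ) ∂μ) ^ (1/(2:ℝ)) := by
          apply ENNReal.rpow_le_rpow _ (by norm_num)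
          exact lintegral_mono fun ξ => ENNReal.rpow_le_rpow (hpt1 ξ) (by norm_num)
      _ ≤ B + (∫⁻ _, ENNReal.ofReal m ^ (2:ℝ) ∂μ) ^ (1/(2:ℝ)) :=
          ENNReal.lintegral_Lp_add_le hFm hMm (by norm_num)
      _ = B + ENNReal.ofReal m := by rw [hconst]
  have hlow : ENNReal.ofReal m ≤ QG + B := by
    calc ENNReal.ofReal m = (∫⁻ _, ENNReal.ofReal m ^ (2:ℝ) ∂μ) ^ (1/(2:ℝ)) := (hconst _).symm
      _ ≤ (∫⁻ ξ, (G ξ + F ξ) ^ (2:ℝ) ∂μ) ^ (1/(2:ℝ)) := by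
          apply ENNReal.rpow_le_rpow _ (by norm_num)
          exact lintegral_mono fun ξ => ENNReal.rpow_le_rpow (hpt2 ξ) (by norm_num)
      _ ≤ QG + B := ENNReal.lintegral_Lp_add_le hGm hFm (by norm_num)
  have hQGfin : QG ≠ ∞ := ne_top_of_le_ne_top (by simp [hBfin, ENNReal.add_ne_top]) hup
  have hint : (∫⁻ ξ, ⨅ i, (‖ξ - x i‖₊ : ℝ≥0∞) ^ (2:ℝ) ∂μ) = ∫⁻ ξ, G ξ ^ (2:ℝ) ∂μ := by
    apply lintegral_congr
    intro ξ
    rw [inf_eq_ofReal x ξ hN, hG, ofReal_sq_rpow _ (dmin_nonneg x ξ hN)]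
  have hqe : quantErr 2 N μ x = QG.toReal := by
    rw [quantErr, hint, hQG, ← ENNReal.toReal_rpow]
  rw [hqe]
  have h1 : QG.toReal ≤ B.toReal + m := by
    have := ENNReal.toReal_mono (by simp [hBfin, ENNReal.add_ne_top]) hup
    rwa [ENNReal.toReal_add hBfin ENNReal.ofReal_ne_top, ENNReal.toReal_ofReal hm0] at this
  have h2 : m ≤ QG.toReal + B.toReal := by
    have := ENNReal.toReal_mono (by simp [hQGfin, hBfin, ENNReal.add_ne_top]) hlow
    rwa [ENNReal.toReal_add hQGfin hBfin, ENNReal.toReal_ofReal hm0] at this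
  rw [abs_le]
  constructor <;> [linarith; linarith]

lemma qdiff_bdd (hN : N ≠ 0) (μ ν : Measure ℝ) [IsProbabilityMeasure μ] [IsProbabilityMeasure ν]
    (hμ : HasFiniteMoment 2 μ) (hν : HasFiniteMoment 2 ν) (x : Fin N → ℝ) :
    |quantErr 2 N μ x - quantErr 2 N ν x| ≤
      ((∫⁻ ξ, (‖ξ‖₊ : ℝ≥0∞) ^ (2:ℝ) ∂μ) ^ (1/(2:ℝ))).toReal
        + ((∫⁻ ξ, (‖ξ‖₊ : ℝ≥0∞) ^ (2:ℝ) ∂ν) ^ (1/(2:ℝ))).toReal := by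
  have h1 := quantErr_near hN μ hμ x
  have h2 := quantErr_near hN ν hν x
  rw [abs_le] at *
  constructor <;> [linarith; linarith]

end bdd

lemma map_fun_eq (n : ℕ) :
    (fun z : ℝ => Real.exp ((n:ℝ)*z/2 - (n:ℝ)^2/4)) = Texp ((n:ℝ)/2) := by
  funext z
  rw [Texp]
  congr 1
  ring

lemma exp_bound {n : ℕ} (hn : 1 ≤ n) : Real.exp (-((n:ℝ)/2)^2/2) ≤ 8/(n:ℝ) := by
  have hn1 : (1:ℝ) ≤ (n:ℝ) := by exact_mod_cast hn
  have hy : (0:ℝ) < (n:ℝ)^2/8 := by positivity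
  have h1 : (n:ℝ)^2/8 ≤ Real.exp ((n:ℝ)^2/8) := by
    have := Real.add_one_le_exp ((n:ℝ)^2/8)
    linarith
  have h2 : Real.exp (-((n:ℝ)/2)^2/2) = (Real.exp ((n:ℝ)^2/8))⁻¹ := by
    rw [← Real.exp_neg]
    congr 1
    ring
  rw [h2]
  have h3 : (Real.exp ((n:ℝ)^2/8))⁻¹ ≤ ((n:ℝ)^2/8)⁻¹ :=
    inv_anti₀ hy h1
  calc (Real.exp ((n:ℝ)^2/8))⁻¹ ≤ ((n:ℝ)^2/8)⁻¹ := h3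
    _ = 8/(n:ℝ)^2 := by field_simp
    _ ≤ 8/(n:ℝ) := by
      apply div_le_div_of_nonneg_left (by norm_num) (by linarith) (by nlinarith)

lemma sup_err {N : ℕ} (hN : N ≠ 0) {ε : ℝ} (hε : 0 < ε) :
    ∃ M : ℕ, ∀ n ≥ M, ∀ x : Fin N → ℝ,
      |quantErr 2 N ((gaussianReal 0 1).map (Texp ((n:ℝ)/2))) x
        - Real.sqrt (1 + mmin x ^ 2)| < ε := by
  obtain ⟨L, hLdef⟩ : ∃ L : ℝ, L = 1 + 6*((N:ℝ)+1)/ε := ⟨_, rfl⟩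
  have hL6 : 0 < 6*((N:ℝ)+1)/ε := by positivity
  have hL1 : 1 ≤ L := by rw [hLdef]; linarith
  have hL0 : (0:ℝ) < L := by linarith
  have hlog0 : 0 ≤ Real.log (4*L) := Real.log_nonneg (by linarith)
  have hεL : ε * L = ε + 6*((N:ℝ)+1) := by
    rw [hLdef]
    field_simp
  have hL3 : (N:ℝ)*(3/L) < ε/2 := by
    rw [show (N:ℝ)*(3/L) = 3*(N:ℝ)/L by ring, div_lt_iff₀ hL0]
    nlinarith [Nat.cast_nonneg (α := ℝ) N]
  obtain ⟨C, hCdef⟩ : ∃ C : ℝ, C = (4*(N:ℝ)+2)*8 + 2*(N:ℝ)*Real.log (4*L) := ⟨_, rfl⟩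
  have hε' : (0:ℝ) < ε - (N:ℝ)*(3/L) := by linarith
  have htd : Filter.Tendsto (fun n : ℕ => C/(n:ℝ)) atTop (𝓝 0) :=
    tendsto_const_div_atTop_nhds_zero_nat C
  have hev : ∀ᶠ n : ℕ in atTop, C/(n:ℝ) < ε - (N:ℝ)*(3/L) :=
    htd.eventually_lt_const hε'
  obtain ⟨M₀, hM₀⟩ := Filter.eventually_atTop.mp hev
  refine ⟨max M₀ 1, fun n hn x => ?_⟩
  have hn1 : 1 ≤ n := le_trans (le_max_right M₀ 1) hn
  have hn0 : (0:ℝ) < (n:ℝ) := by exact_mod_cast hn1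
  have hs : (0:ℝ) < (n:ℝ)/2 := by linarith
  have hkey := key_est hN hs hL1 x
  have he := exp_bound hn1
  have hN0 : (0:ℝ) ≤ (N:ℝ) := Nat.cast_nonneg N
  have hlogs : (N:ℝ) * (Real.log (4*L)/((n:ℝ)/2)) = 2*(N:ℝ)*Real.log (4*L)/(n:ℝ) := by
    field_simp
  have h4 : C/(n:ℝ) = (4*(N:ℝ)+2)*(8/(n:ℝ)) + 2*(N:ℝ)*Real.log (4*L)/(n:ℝ) := by
    rw [hCdef]
    field_simp
  have h1 : (4*(N:ℝ)+2)*Real.exp (-((n:ℝ)/2)^2/2) ≤ (4*(N:ℝ)+2)*(8/(n:ℝ)) :=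
    mul_le_mul_of_nonneg_left he (by linarith)
  have hbound : (4*(N:ℝ)+2)*Real.exp (-((n:ℝ)/2)^2/2)
      + (N:ℝ)*(Real.log (4*L)/((n:ℝ)/2) + 3/L) ≤ C/(n:ℝ) + (N:ℝ)*(3/L) := by
    rw [mul_add, hlogs, h4]
    linarith
  calc |quantErr 2 N ((gaussianReal 0 1).map (Texp ((n:ℝ)/2))) x
        - Real.sqrt (1 + mmin x ^ 2)|
      ≤ (4*(N:ℝ)+2)*Real.exp (-((n:ℝ)/2)^2/2)
        + (N:ℝ)*(Real.log (4*L)/((n:ℝ)/2) + 3/L) := hkey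
    _ ≤ C/(n:ℝ) + (N:ℝ)*(3/L) := hbound
    _ < (ε - (N:ℝ)*(3/L)) + (N:ℝ)*(3/L) := by
        have := hM₀ n (le_trans (le_max_left M₀ 1) hn)
        linarith
    _ = ε := by ring

lemma lint_dmin_fin {N : ℕ} (hN : N ≠ 0) (ν : Measure ℝ) [IsProbabilityMeasure ν]
    (hmom : HasFiniteMoment 2 ν) (x : Fin N → ℝ) :
    ∫⁻ ξ, ENNReal.ofReal (dmin x ξ ^ 2) ∂ν ≠ ∞ := by
  set m := mmin x with hm
  have hm0 : 0 ≤ m := mmin_nonneg x hN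
  obtain ⟨j, hj, hje⟩ := dmin_exists x 0 hN
  have hmj : m = |x j| := by rwa [zero_sub, abs_neg] at hje
  have hpt : ∀ ξ : ℝ, ENNReal.ofReal (dmin x ξ ^ 2)
      ≤ 2 * (‖ξ‖₊ : ℝ≥0∞) ^ (2:ℝ) + ENNReal.ofReal (2*m^2) := by
    intro ξ
    have h1 : dmin x ξ ≤ |ξ| + m := by
      calc dmin x ξ ≤ |ξ - x j| := dmin_le x ξ hN j
        _ ≤ |ξ| + |x j| := abs_sub _ _
        _ = |ξ| + m := by rw [hmj]
    have h2 : dmin x ξ ^ 2 ≤ 2*|ξ|^2 + 2*m^2 := by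
      nlinarith [dmin_nonneg x ξ hN, abs_nonneg ξ, sq_nonneg (|ξ| - m)]
    calc ENNReal.ofReal (dmin x ξ ^ 2) ≤ ENNReal.ofReal (2*|ξ|^2 + 2*m^2) :=
        ENNReal.ofReal_le_ofReal h2
      _ = ENNReal.ofReal (2*|ξ|^2) + ENNReal.ofReal (2*m^2) :=
        ENNReal.ofReal_add (by positivity) (by positivity)
      _ = 2 * (‖ξ‖₊ : ℝ≥0∞) ^ (2:ℝ) + ENNReal.ofReal (2*m^2) := by
        rw [show (2:ℝ)*|ξ|^2 = 2*(|ξ|^2) by ring, ENNReal.ofReal_mul (by norm_num),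
          nnnorm_rpow_two]
        norm_num
  have hint : ∫⁻ ξ, (2 * (‖ξ‖₊ : ℝ≥0∞) ^ (2:ℝ) + ENNReal.ofReal (2*m^2)) ∂ν ≠ ∞ := by
    rw [lintegral_add_right _ measurable_const, lintegral_const_mul _
      (measurable_nnnorm.coe_nnreal_ennreal.pow_const (2:ℝ)), lintegral_const, measure_univ,
      mul_one]
    exact ENNReal.add_ne_top.mpr ⟨ENNReal.mul_ne_top (by norm_num) hmom, ENNReal.ofReal_ne_top⟩
  exact ne_top_of_le_ne_top hint (lintegral_mono hpt)

lemma quantErr_sq {N : ℕ} (hN : N ≠ 0) (ν : Measure ℝ) [IsProbabilityMeasure ν]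
    (hmom : HasFiniteMoment 2 ν) (x : Fin N → ℝ)
    (h : quantErr 2 N ν x = Real.sqrt (1 + mmin x ^ 2)) :
    ∫⁻ ξ, ENNReal.ofReal (dmin x ξ ^ 2) ∂ν = ENNReal.ofReal (1 + mmin x ^ 2) := by
  have hfin := lint_dmin_fin hN ν hmom x
  have hq : quantErr 2 N ν x
      = Real.sqrt ((∫⁻ ξ, ENNReal.ofReal (dmin x ξ ^ 2) ∂ν).toReal) := by
    rw [quantErr, lintegral_congr (fun ξ => inf_eq_ofReal x ξ hN), Real.sqrt_eq_rpow]
  rw [hq] at h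
  have hT0 : 0 ≤ (∫⁻ ξ, ENNReal.ofReal (dmin x ξ ^ 2) ∂ν).toReal := ENNReal.toReal_nonneg
  have hb0 : (0:ℝ) ≤ 1 + mmin x ^ 2 := by positivity
  have hTeq : (∫⁻ ξ, ENNReal.ofReal (dmin x ξ ^ 2) ∂ν).toReal = 1 + mmin x ^ 2 := by
    have := congrArg (fun y : ℝ => y ^ 2) h
    simpa [Real.sq_sqrt hT0, Real.sq_sqrt hb0] using this
  rw [← hTeq, ENNReal.ofReal_toReal hfin]

lemma ae_ge_of_lintegral_eq {ν : Measure ℝ} {f h : ℝ → ℝ≥0∞} (hf : Measurable f)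
    (hh : Measurable h) (hle : ∀ ξ, h ξ ≤ f ξ)
    (heq : ∫⁻ ξ, f ξ ∂ν = ∫⁻ ξ, h ξ ∂ν) (hfin : ∫⁻ ξ, h ξ ∂ν ≠ ∞) :
    ∀ᵐ ξ ∂ν, f ξ ≤ h ξ := by
  have hsub : ∫⁻ ξ, (f ξ - h ξ) ∂ν = 0 := by
    rw [lintegral_sub hh hfin (ae_of_all _ hle), heq, tsub_self]
  have h2 := (lintegral_eq_zero_iff (hf.sub hh)).mp hsub
  filter_upwards [h2] with ξ hξ
  have : f ξ - h ξ = 0 := hξ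
  exact tsub_eq_zero_iff_le.mp this

lemma dmin_zero {N : ℕ} (hN : N ≠ 0) (ξ : ℝ) : dmin (fun _ : Fin N => (0:ℝ)) ξ = |ξ| := by
  obtain ⟨j, hj, hje⟩ := dmin_exists (fun _ : Fin N => (0:ℝ)) ξ hN
  rw [hje, sub_zero]

lemma mmin_zero {N : ℕ} (hN : N ≠ 0) : mmin (fun _ : Fin N => (0:ℝ)) = 0 := by
  rw [mmin, dmin_zero hN, abs_zero]

lemma dmin_pair {N : ℕ} (hN2 : 2 ≤ N) (t ξ : ℝ) :
    dmin (fun i : Fin N => if (i : ℕ) = 0 then 0 else t) ξ = min |ξ| |ξ - t| := by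
  have hN : N ≠ 0 := by omega
  apply le_antisymm
  · apply le_min
    · have := dmin_le (fun i : Fin N => if (i : ℕ) = 0 then 0 else t) ξ hN ⟨0, by omega⟩
      simpa using this
    · have := dmin_le (fun i : Fin N => if (i : ℕ) = 0 then 0 else t) ξ hN ⟨1, by omega⟩
      simpa using this
  · obtain ⟨j, hj, hje⟩ := dmin_exists (fun i : Fin N => if (i : ℕ) = 0 then 0 else t) ξ hN
    rw [hje]
    by_cases h : (j : ℕ) = 0
    · simp only [h, if_pos, sub_zero]
      exact min_le_left _ _
    · simp only [h, if_neg, ite_false]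
      exact min_le_right _ _

lemma mmin_pair {N : ℕ} (hN2 : 2 ≤ N) (t : ℝ) :
    mmin (fun i : Fin N => if (i : ℕ) = 0 then 0 else t) = 0 := by
  rw [mmin, dmin_pair hN2]
  simp

end QAux


open ProbabilityTheory

/-- for every `N ≥ 2`, `(P₂(ℝ), Q_{N,2})` is not complete: the sequence of
distributions of `X_n = exp(nZ/2 − n²/4)` (with `Z` standard normal) consists of probability
measures with finite second moments, is Cauchy for `Q_{N,2}`, but has no limit in `P₂(ℝ)` for
`Q_{N,2}`. -/
theorem stmt19 (N : ℕ) (hN : 2 ≤ N)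
    (μ : ℕ → Measure ℝ)
    (hμ : μ = fun n : ℕ => (ProbabilityTheory.gaussianReal 0 1).map
      (fun z => Real.exp ((n : ℝ) * z / 2 - (n : ℝ) ^ 2 / 4))) :
    (∀ n, IsProbabilityMeasure (μ n) ∧ HasFiniteMoment 2 (μ n)) ∧
    (∀ ε : ℝ, 0 < ε → ∃ M : ℕ, ∀ m ≥ M, ∀ n ≥ M, qDist N (μ m) (μ n) < ε) ∧
    ¬ ∃ ν : Measure ℝ, IsProbabilityMeasure ν ∧ HasFiniteMoment 2 ν ∧
        Tendsto (fun n => qDist N (μ n) ν) atTop (𝓝 0) := by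
  have hN0 : N ≠ 0 := by omega
  have hμ' : ∀ n : ℕ, μ n = (gaussianReal 0 1).map (Texp ((n:ℝ)/2)) := by
    intro n
    rw [hμ]
    simp only
    rw [map_fun_eq]
  have hprob : ∀ n, IsProbabilityMeasure (μ n) := by
    intro n
    rw [hμ' n]
    exact Measure.isProbabilityMeasure_map (measurable_Texp _).aemeasurable
  have hmom : ∀ n, HasFiniteMoment 2 (μ n) := by
    intro n
    show (∫⁻ ξ, (‖ξ‖₊ : ℝ≥0∞) ^ (2:ℝ) ∂(μ n)) ≠ ∞
    rw [hμ' n, moment_eq]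
    exact ENNReal.one_ne_top
  refine ⟨fun n => ⟨hprob n, hmom n⟩, ?_, ?_⟩
  · -- Cauchy
    intro ε hε
    obtain ⟨M, hM⟩ := sup_err hN0 (show (0:ℝ) < ε/3 by linarith)
    refine ⟨M, fun m hm n hn => ?_⟩
    have hle : qDist N (μ m) (μ n) ≤ ε/3 + ε/3 := by
      rw [qDist]
      apply ciSup_le
      intro x
      have h1 := hM m hm x
      have h2 := hM n hn x
      rw [← hμ' m] at h1
      rw [← hμ' n] at h2
      calc |quantErr 2 N (μ m) x - quantErr 2 N (μ n) x|
          ≤ |quantErr 2 N (μ m) x - Real.sqrt (1 + mmin x ^ 2)|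
            + |Real.sqrt (1 + mmin x ^ 2) - quantErr 2 N (μ n) x| := abs_sub_le _ _ _
        _ ≤ ε/3 + ε/3 := by
            rw [abs_sub_comm (Real.sqrt (1 + mmin x ^ 2))]
            exact add_le_add h1.le h2.le
    linarith
  · -- no limit
    rintro ⟨ν, hνprob, hνmom, hνconv⟩
    haveI := hνprob
    -- the quantization error of ν is forced
    have hq : ∀ x : Fin N → ℝ, quantErr 2 N ν x = Real.sqrt (1 + mmin x ^ 2) := by
      intro x
      by_contra hne
      set d := |quantErr 2 N ν x - Real.sqrt (1 + mmin x ^ 2)| with hd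
      have hd0 : 0 < d := abs_pos.mpr (sub_ne_zero.mpr hne)
      obtain ⟨M1, hM1⟩ := sup_err hN0 (show (0:ℝ) < d/2 by linarith)
      obtain ⟨M2, hM2⟩ := Filter.eventually_atTop.mp
        (hνconv.eventually_lt_const (show (0:ℝ) < d/2 by linarith))
      set n := max M1 M2 with hn
      haveI := hprob n
      have h1 := hM1 n (le_max_left _ _) x
      rw [← hμ' n] at h1
      have h2 : qDist N (μ n) ν < d/2 := hM2 n (le_max_right _ _)
      have h3 : |quantErr 2 N (μ n) x - quantErr 2 N ν x| ≤ qDist N (μ n) ν := by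
        rw [qDist]
        apply le_ciSup (f := fun y => |quantErr 2 N (μ n) y - quantErr 2 N ν y|) ?_ x
        refine ⟨((∫⁻ ξ, (‖ξ‖₊ : ℝ≥0∞) ^ (2:ℝ) ∂(μ n)) ^ (1/(2:ℝ))).toReal
          + ((∫⁻ ξ, (‖ξ‖₊ : ℝ≥0∞) ^ (2:ℝ) ∂ν) ^ (1/(2:ℝ))).toReal, ?_⟩
        rintro y ⟨x', rfl⟩
        exact qdiff_bdd hN0 (μ n) ν (hmom n) hνmom x'
      have : d < d := by
        calc d ≤ |quantErr 2 N ν x - quantErr 2 N (μ n) x|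
              + |quantErr 2 N (μ n) x - Real.sqrt (1 + mmin x ^ 2)| := abs_sub_le _ _ _
          _ < d/2 + d/2 := by
              rw [abs_sub_comm]
              exact add_lt_add (lt_of_le_of_lt h3 h2) h1
          _ = d := by ring
      exact lt_irrefl _ this
    -- lintegral identities
    have h0 : ∫⁻ ξ, ENNReal.ofReal (dmin (fun _ : Fin N => (0:ℝ)) ξ ^ 2) ∂ν = 1 := by
      have := quantErr_sq hN0 ν hνmom (fun _ => 0) (hq (fun _ => 0))
      rwa [mmin_zero hN0, show (0:ℝ)^2 = 0 by ring, add_zero, ENNReal.ofReal_one] at this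
    have hpairint : ∀ t : ℝ,
        ∫⁻ ξ, ENNReal.ofReal (dmin (fun i : Fin N => if (i:ℕ) = 0 then 0 else t) ξ ^ 2) ∂ν
          = 1 := by
      intro t
      have := quantErr_sq hN0 ν hνmom _ (hq (fun i : Fin N => if (i:ℕ) = 0 then 0 else t))
      rwa [mmin_pair hN, show (0:ℝ)^2 = 0 by ring, add_zero, ENNReal.ofReal_one] at this
    -- a.e. inequality
    have hae : ∀ t : ℝ, ∀ᵐ ξ ∂ν, 2*t*ξ ≤ t^2 := by
      intro t
      have hf : Measurable fun ξ => ENNReal.ofReal (dmin (fun _ : Fin N => (0:ℝ)) ξ ^ 2) :=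
        ((measurable_dmin _).pow_const 2).ennreal_ofReal
      have hh : Measurable fun ξ =>
          ENNReal.ofReal (dmin (fun i : Fin N => if (i:ℕ) = 0 then 0 else t) ξ ^ 2) :=
        ((measurable_dmin _).pow_const 2).ennreal_ofReal
      have hle : ∀ ξ, ENNReal.ofReal (dmin (fun i : Fin N => if (i:ℕ) = 0 then 0 else t) ξ ^ 2)
          ≤ ENNReal.ofReal (dmin (fun _ : Fin N => (0:ℝ)) ξ ^ 2) := by
        intro ξ
        apply ENNReal.ofReal_le_ofReal
        rw [dmin_pair hN, dmin_zero hN0]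
        have h1 : min |ξ| |ξ - t| ≤ |ξ| := min_le_left _ _
        have h2 : 0 ≤ min |ξ| |ξ - t| := le_min (abs_nonneg _) (abs_nonneg _)
        nlinarith
      have := ae_ge_of_lintegral_eq hf hh hle (h0.trans (hpairint t).symm)
        (by rw [hpairint t]; exact ENNReal.one_ne_top)
      filter_upwards [this] with ξ hξ
      have hreal : dmin (fun _ : Fin N => (0:ℝ)) ξ ^ 2
          ≤ dmin (fun i : Fin N => if (i:ℕ) = 0 then 0 else t) ξ ^ 2 :=
        (ENNReal.ofReal_le_ofReal_iff (sq_nonneg _)).mp hξ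
      rw [dmin_pair hN, dmin_zero hN0] at hreal
      have h1 : min |ξ| |ξ - t| ≤ |ξ - t| := min_le_right _ _
      have h2 : 0 ≤ min |ξ| |ξ - t| := le_min (abs_nonneg _) (abs_nonneg _)
      have h3 : ξ^2 ≤ (ξ - t)^2 := by
        nlinarith [sq_abs ξ, sq_abs (ξ - t), abs_nonneg ξ, abs_nonneg (ξ - t)]
      nlinarith
    -- positive part is null
    have hpos : ν {ξ : ℝ | 0 < ξ} = 0 := by
      have hk : ∀ k : ℕ, ν {ξ : ℝ | (1/((k:ℝ)+1))/2 < ξ} = 0 := by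
        intro k
        have ht0 : (0:ℝ) < 1/((k:ℝ)+1) := by positivity
        have h := hae (1/((k:ℝ)+1))
        rw [ae_iff] at h
        apply measure_mono_null _ h
        intro ξ hξ
        simp only [Set.mem_setOf_eq] at hξ ⊢
        intro habs
        nlinarith
      have hsub : {ξ : ℝ | 0 < ξ} ⊆ ⋃ k : ℕ, {ξ : ℝ | (1/((k:ℝ)+1))/2 < ξ} := by
        intro ξ hξ
        simp only [Set.mem_setOf_eq] at hξ
        obtain ⟨k, hk'⟩ := exists_nat_one_div_lt hξ
        refine Set.mem_iUnion.mpr ⟨k, ?_⟩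
        simp only [Set.mem_setOf_eq]
        have : (0:ℝ) < 1/((k:ℝ)+1) := by positivity
        linarith
      exact measure_mono_null hsub (measure_iUnion_null hk)
    -- negative part is null
    have hneg : ν {ξ : ℝ | ξ < 0} = 0 := by
      have hk : ∀ k : ℕ, ν {ξ : ℝ | ξ < -((1/((k:ℝ)+1))/2)} = 0 := by
        intro k
        have ht0 : (0:ℝ) < 1/((k:ℝ)+1) := by positivity
        have h := hae (-(1/((k:ℝ)+1)))
        rw [ae_iff] at h
        apply measure_mono_null _ h
        intro ξ hξ
        simp only [Set.mem_setOf_eq] at hξ ⊢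
        intro habs
        nlinarith
      have hsub : {ξ : ℝ | ξ < 0} ⊆ ⋃ k : ℕ, {ξ : ℝ | ξ < -((1/((k:ℝ)+1))/2)} := by
        intro ξ hξ
        simp only [Set.mem_setOf_eq] at hξ
        obtain ⟨k, hk'⟩ := exists_nat_one_div_lt (show (0:ℝ) < -ξ by linarith)
        refine Set.mem_iUnion.mpr ⟨k, ?_⟩
        simp only [Set.mem_setOf_eq]
        have : (0:ℝ) < 1/((k:ℝ)+1) := by positivity
        linarith
      exact measure_mono_null hsub (measure_iUnion_null hk)
    have hzero : ∀ᵐ ξ ∂ν, ξ = (0:ℝ) := by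
      rw [ae_iff]
      apply measure_mono_null _ (measure_union_null hpos hneg)
      intro ξ hξ
      simp only [Set.mem_setOf_eq] at hξ ⊢
      rcases lt_trichotomy ξ 0 with h | h | h
      · exact Or.inr h
      · exact absurd h hξ
      · exact Or.inl h
    have hcontr : (1:ℝ≥0∞) = 0 := by
      rw [← h0]
      have : ∀ᵐ ξ ∂ν, ENNReal.ofReal (dmin (fun _ : Fin N => (0:ℝ)) ξ ^ 2) = 0 := by
        filter_upwards [hzero] with ξ hξ
        rw [hξ, dmin_zero hN0, abs_zero]
        simp
      rw [lintegral_congr_ae this, lintegral_zero]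
    simp at hcontr
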